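/- Type preservation of elaboration from ImpEff to ExEff (computation part): if Γ ⊢c c : C ↝ c' holds in ImpEff, then elab(Γ) ⊢c c' : elab(C) holds in ExEff. -/

import Mathlib

/-! # ExEff: an explicitly-typed core calculus for algebraic effect handlers
    (Karachalias, Pretnar, Saleh, Vanderhallen, Schrijvers,
     "Explicit Effect Subtyping")

    Syntax, typing, and small-step call-by-value operational semantics. -/

namespace ExEff

/-- Operation names. -/
abbrev Op := String

/-- Skeletons τ. -/
inductive Skel : Type
  | var     : ℕ → Skel
  | unit    : Skel
  | arrow   : Skel → Skel → Skel
  | handler : Skel → Skel → Skel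
  | all     : ℕ → Skel → Skel

/-- Dirts Δ: sets of operations terminated by ∅ or a dirt variable δ. -/
inductive Dirt : Type
  | var   : ℕ → Dirt
  | empty : Dirt
  | cons  : Op → Dirt → Dirt

mutual
/-- Value types T. -/
inductive VTy : Type
  | var     : ℕ → VTy
  | unit    : VTy
  | arrow   : VTy → CTy → VTy
  | handler : CTy → CTy → VTy
  | allSkel : ℕ → VTy → VTy
  | allTy   : ℕ → Skel → VTy → VTy
  | allDirt : ℕ → VTy → VTy
  | qual    : SimpleCt → VTy → VTy

/-- Computation types C = T ! Δ. -/
inductive CTy : Type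
  | bang : VTy → Dirt → CTy

/-- Simple coercion types π. -/
inductive SimpleCt : Type
  | vle : VTy → VTy → SimpleCt
  | dle : Dirt → Dirt → SimpleCt
end

/-- Coercion types ρ. -/
inductive Ct : Type
  | simple : SimpleCt → Ct
  | cle    : CTy → CTy → Ct

/-- Subtyping coercions γ. -/
inductive Coercion : Type
  | var       : ℕ → Coercion
  | unit      : Coercion
  | reflVar   : ℕ → Coercion
  | reflDirt  : Dirt → Coercion
  | arrow     : Coercion → Coercion → Coercion
  | handler   : Coercion → Coercion → Coercion
  | emptyDirt : Dirt → Coercion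
  | consOp    : Op → Coercion → Coercion
  | allSkel   : ℕ → Coercion → Coercion
  | allTy     : ℕ → Skel → Coercion → Coercion
  | allDirt   : ℕ → Coercion → Coercion
  | qual      : SimpleCt → Coercion → Coercion
  | bang      : Coercion → Coercion → Coercion

mutual
/-- Values v. -/
inductive Value : Type
  | var     : ℕ → Value
  | unit    : Value
  | lam     : ℕ → VTy → Comp → Value
  | handler : Handler → Value
  | lamSkel : ℕ → Value → Value
  | appSkel : Value → Skel → Value
  | lamTy   : ℕ → Skel → Value → Value
  | appTy   : Value → VTy → Value
  | lamDirt : ℕ → Value → Value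
  | appDirt : Value → Dirt → Value
  | lamCo   : ℕ → SimpleCt → Value → Value
  | appCo   : Value → Coercion → Value
  | cast    : Value → Coercion → Value

/-- Handlers { return (x : T) ↦ c_r, [Op x k ↦ c_Op] }. -/
inductive Handler : Type
  | mk : ℕ → VTy → Comp → OpClauses → Handler

/-- Lists of operation clauses Op x k ↦ c. -/
inductive OpClauses : Type
  | nil  : OpClauses
  | cons : Op → ℕ → ℕ → Comp → OpClauses → OpClauses

/-- Computations c. -/
inductive Comp : Type
  | ret    : Value → Comp
  | opCall : Op → Value → ℕ → VTy → Comp → Comp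
  | doIn   : ℕ → Comp → Comp → Comp
  | handle : Value → Comp → Comp
  | app    : Value → Value → Comp
  | letIn  : ℕ → Value → Comp → Comp
  | cast   : Comp → Coercion → Comp
end

/-! ## Substitution (naive, name-based) -/

def Skel.subst : Skel → ℕ → Skel → Skel
  | .var s, ς, τ' => if s = ς then τ' else .var s
  | .unit, _, _ => .unit
  | .arrow a b, ς, τ' => .arrow (a.subst ς τ') (b.subst ς τ')
  | .handler a b, ς, τ' => .handler (a.subst ς τ') (b.subst ς τ')
  | .all s a, ς, τ' => .all s (a.subst ς τ')

def Dirt.subst : Dirt → ℕ → Dirt → Dirt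
  | .var d, δ, Δ' => if d = δ then Δ' else .var d
  | .empty, _, _ => .empty
  | .cons op Δ, δ, Δ' => .cons op (Δ.subst δ Δ')

mutual
def VTy.substSkel : VTy → ℕ → Skel → VTy
  | .var a, _, _ => .var a
  | .unit, _, _ => .unit
  | .arrow T C, ς, τ' => .arrow (T.substSkel ς τ') (C.substSkel ς τ')
  | .handler C1 C2, ς, τ' => .handler (C1.substSkel ς τ') (C2.substSkel ς τ')
  | .allSkel s T, ς, τ' => .allSkel s (T.substSkel ς τ')
  | .allTy a τ T, ς, τ' => .allTy a (τ.subst ς τ') (T.substSkel ς τ')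
  | .allDirt d T, ς, τ' => .allDirt d (T.substSkel ς τ')
  | .qual π T, ς, τ' => .qual (π.substSkel ς τ') (T.substSkel ς τ')
def CTy.substSkel : CTy → ℕ → Skel → CTy
  | .bang T Δ, ς, τ' => .bang (T.substSkel ς τ') Δ
def SimpleCt.substSkel : SimpleCt → ℕ → Skel → SimpleCt
  | .vle T1 T2, ς, τ' => .vle (T1.substSkel ς τ') (T2.substSkel ς τ')
  | .dle Δ1 Δ2, _, _ => .dle Δ1 Δ2
end

mutual
def VTy.substTy : VTy → ℕ → VTy → VTy
  | .var a, α, T' => if a = α then T' else .var a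
  | .unit, _, _ => .unit
  | .arrow T C, α, T' => .arrow (T.substTy α T') (C.substTy α T')
  | .handler C1 C2, α, T' => .handler (C1.substTy α T') (C2.substTy α T')
  | .allSkel s T, α, T' => .allSkel s (T.substTy α T')
  | .allTy a τ T, α, T' => .allTy a τ (T.substTy α T')
  | .allDirt d T, α, T' => .allDirt d (T.substTy α T')
  | .qual π T, α, T' => .qual (π.substTy α T') (T.substTy α T')
def CTy.substTy : CTy → ℕ → VTy → CTy
  | .bang T Δ, α, T' => .bang (T.substTy α T') Δ
def SimpleCt.substTy : SimpleCt → ℕ → VTy → SimpleCt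
  | .vle T1 T2, α, T' => .vle (T1.substTy α T') (T2.substTy α T')
  | .dle Δ1 Δ2, _, _ => .dle Δ1 Δ2
end

mutual
def VTy.substDirt : VTy → ℕ → Dirt → VTy
  | .var a, _, _ => .var a
  | .unit, _, _ => .unit
  | .arrow T C, δ, Δ' => .arrow (T.substDirt δ Δ') (C.substDirt δ Δ')
  | .handler C1 C2, δ, Δ' => .handler (C1.substDirt δ Δ') (C2.substDirt δ Δ')
  | .allSkel s T, δ, Δ' => .allSkel s (T.substDirt δ Δ')
  | .allTy a τ T, δ, Δ' => .allTy a τ (T.substDirt δ Δ')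
  | .allDirt d T, δ, Δ' => .allDirt d (T.substDirt δ Δ')
  | .qual π T, δ, Δ' => .qual (π.substDirt δ Δ') (T.substDirt δ Δ')
def CTy.substDirt : CTy → ℕ → Dirt → CTy
  | .bang T Δ, δ, Δ' => .bang (T.substDirt δ Δ') (Δ.subst δ Δ')
def SimpleCt.substDirt : SimpleCt → ℕ → Dirt → SimpleCt
  | .vle T1 T2, δ, Δ' => .vle (T1.substDirt δ Δ') (T2.substDirt δ Δ')
  | .dle Δ1 Δ2, δ, Δ' => .dle (Δ1.subst δ Δ') (Δ2.subst δ Δ')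
end

def Coercion.substSkel : Coercion → ℕ → Skel → Coercion
  | .var w, _, _ => .var w
  | .unit, _, _ => .unit
  | .reflVar a, _, _ => .reflVar a
  | .reflDirt Δ, _, _ => .reflDirt Δ
  | .arrow γ1 γ2, ς, τ' => .arrow (γ1.substSkel ς τ') (γ2.substSkel ς τ')
  | .handler γ1 γ2, ς, τ' => .handler (γ1.substSkel ς τ') (γ2.substSkel ς τ')
  | .emptyDirt Δ, _, _ => .emptyDirt Δ
  | .consOp op γ, ς, τ' => .consOp op (γ.substSkel ς τ')
  | .allSkel s γ, ς, τ' => .allSkel s (γ.substSkel ς τ')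
  | .allTy a τ γ, ς, τ' => .allTy a (τ.subst ς τ') (γ.substSkel ς τ')
  | .allDirt d γ, ς, τ' => .allDirt d (γ.substSkel ς τ')
  | .qual π γ, ς, τ' => .qual (π.substSkel ς τ') (γ.substSkel ς τ')
  | .bang γ1 γ2, ς, τ' => .bang (γ1.substSkel ς τ') (γ2.substSkel ς τ')

mutual
/-- Reflexivity coercion for an arbitrary value type. -/
def VTy.reflCo : VTy → Coercion
  | .var a => .reflVar a
  | .unit => .unit
  | .arrow T C => .arrow T.reflCo C.reflCo
  | .handler C1 C2 => .handler C1.reflCo C2.reflCo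
  | .allSkel s T => .allSkel s T.reflCo
  | .allTy a τ T => .allTy a τ T.reflCo
  | .allDirt d T => .allDirt d T.reflCo
  | .qual π T => .qual π T.reflCo
def CTy.reflCo : CTy → Coercion
  | .bang T Δ => .bang T.reflCo (.reflDirt Δ)
end

def Coercion.substTy : Coercion → ℕ → VTy → Coercion
  | .var w, _, _ => .var w
  | .unit, _, _ => .unit
  | .reflVar a, α, T' => if a = α then T'.reflCo else .reflVar a
  | .reflDirt Δ, _, _ => .reflDirt Δ
  | .arrow γ1 γ2, α, T' => .arrow (γ1.substTy α T') (γ2.substTy α T')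
  | .handler γ1 γ2, α, T' => .handler (γ1.substTy α T') (γ2.substTy α T')
  | .emptyDirt Δ, _, _ => .emptyDirt Δ
  | .consOp op γ, α, T' => .consOp op (γ.substTy α T')
  | .allSkel s γ, α, T' => .allSkel s (γ.substTy α T')
  | .allTy a τ γ, α, T' => .allTy a τ (γ.substTy α T')
  | .allDirt d γ, α, T' => .allDirt d (γ.substTy α T')
  | .qual π γ, α, T' => .qual (π.substTy α T') (γ.substTy α T')
  | .bang γ1 γ2, α, T' => .bang (γ1.substTy α T') (γ2.substTy α T')

def Coercion.substDirt : Coercion → ℕ → Dirt → Coercion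
  | .var w, _, _ => .var w
  | .unit, _, _ => .unit
  | .reflVar a, _, _ => .reflVar a
  | .reflDirt Δ, δ, Δ' => .reflDirt (Δ.subst δ Δ')
  | .arrow γ1 γ2, δ, Δ' => .arrow (γ1.substDirt δ Δ') (γ2.substDirt δ Δ')
  | .handler γ1 γ2, δ, Δ' => .handler (γ1.substDirt δ Δ') (γ2.substDirt δ Δ')
  | .emptyDirt Δ, δ, Δ' => .emptyDirt (Δ.subst δ Δ')
  | .consOp op γ, δ, Δ' => .consOp op (γ.substDirt δ Δ')
  | .allSkel s γ, δ, Δ' => .allSkel s (γ.substDirt δ Δ')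
  | .allTy a τ γ, δ, Δ' => .allTy a τ (γ.substDirt δ Δ')
  | .allDirt d γ, δ, Δ' => .allDirt d (γ.substDirt δ Δ')
  | .qual π γ, δ, Δ' => .qual (π.substDirt δ Δ') (γ.substDirt δ Δ')
  | .bang γ1 γ2, δ, Δ' => .bang (γ1.substDirt δ Δ') (γ2.substDirt δ Δ')

def Coercion.substCo : Coercion → ℕ → Coercion → Coercion
  | .var w, ω, γ' => if w = ω then γ' else .var w
  | .unit, _, _ => .unit
  | .reflVar a, _, _ => .reflVar a
  | .reflDirt Δ, _, _ => .reflDirt Δ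
  | .arrow γ1 γ2, ω, γ' => .arrow (γ1.substCo ω γ') (γ2.substCo ω γ')
  | .handler γ1 γ2, ω, γ' => .handler (γ1.substCo ω γ') (γ2.substCo ω γ')
  | .emptyDirt Δ, _, _ => .emptyDirt Δ
  | .consOp op γ, ω, γ' => .consOp op (γ.substCo ω γ')
  | .allSkel s γ, ω, γ' => .allSkel s (γ.substCo ω γ')
  | .allTy a τ γ, ω, γ' => .allTy a τ (γ.substCo ω γ')
  | .allDirt d γ, ω, γ' => .allDirt d (γ.substCo ω γ')
  | .qual π γ, ω, γ' => .qual (π) (γ.substCo ω γ')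
  | .bang γ1 γ2, ω, γ' => .bang (γ1.substCo ω γ') (γ2.substCo ω γ')

/-- A bundle of simultaneous substitutions on all type-level sorts,
    used to map them through terms. -/
structure TySub where
  skel : Skel → Skel
  vty  : VTy → VTy
  dirt : Dirt → Dirt
  ct   : SimpleCt → SimpleCt
  co   : Coercion → Coercion

mutual
def Value.mapTy : Value → TySub → Value
  | .var x, _ => .var x
  | .unit, _ => .unit
  | .lam x T c, f => .lam x (f.vty T) (c.mapTy f)
  | .handler h, f => .handler (h.mapTy f)
  | .lamSkel s v, f => .lamSkel s (v.mapTy f)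
  | .appSkel v τ, f => .appSkel (v.mapTy f) (f.skel τ)
  | .lamTy a τ v, f => .lamTy a (f.skel τ) (v.mapTy f)
  | .appTy v T, f => .appTy (v.mapTy f) (f.vty T)
  | .lamDirt d v, f => .lamDirt d (v.mapTy f)
  | .appDirt v Δ, f => .appDirt (v.mapTy f) (f.dirt Δ)
  | .lamCo w π v, f => .lamCo w (f.ct π) (v.mapTy f)
  | .appCo v γ, f => .appCo (v.mapTy f) (f.co γ)
  | .cast v γ, f => .cast (v.mapTy f) (f.co γ)
def Handler.mapTy : Handler → TySub → Handler
  | .mk x T cr cls, f => .mk x (f.vty T) (cr.mapTy f) (cls.mapTy f)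
def OpClauses.mapTy : OpClauses → TySub → OpClauses
  | .nil, _ => .nil
  | .cons op x k c rest, f => .cons op x k (c.mapTy f) (rest.mapTy f)
def Comp.mapTy : Comp → TySub → Comp
  | .ret v, f => .ret (v.mapTy f)
  | .opCall op v y T c, f => .opCall op (v.mapTy f) y (f.vty T) (c.mapTy f)
  | .doIn x c1 c2, f => .doIn x (c1.mapTy f) (c2.mapTy f)
  | .handle v c, f => .handle (v.mapTy f) (c.mapTy f)
  | .app v1 v2, f => .app (v1.mapTy f) (v2.mapTy f)
  | .letIn x v c, f => .letIn x (v.mapTy f) (c.mapTy f)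
  | .cast c γ, f => .cast (c.mapTy f) (f.co γ)
end

/-- The substitution [τ/ς]. -/
def skelSub (ς : ℕ) (τ' : Skel) : TySub :=
  ⟨fun τ => τ.subst ς τ', fun T => T.substSkel ς τ', id,
   fun π => π.substSkel ς τ', fun γ => γ.substSkel ς τ'⟩

/-- The substitution [T/α]. -/
def tySub (α : ℕ) (T' : VTy) : TySub :=
  ⟨id, fun T => T.substTy α T', id,
   fun π => π.substTy α T', fun γ => γ.substTy α T'⟩

/-- The substitution [Δ/δ]. -/
def dirtSub (δ : ℕ) (Δ' : Dirt) : TySub :=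
  ⟨id, fun T => T.substDirt δ Δ', fun Δ => Δ.subst δ Δ',
   fun π => π.substDirt δ Δ', fun γ => γ.substDirt δ Δ'⟩

/-- The substitution [γ/ω]. -/
def coSub (ω : ℕ) (γ' : Coercion) : TySub :=
  ⟨id, id, id, id, fun γ => γ.substCo ω γ'⟩

mutual
def Value.substVal : Value → ℕ → Value → Value
  | .var y, x, w => if y = x then w else .var y
  | .unit, _, _ => .unit
  | .lam y T c, x, w => .lam y T (c.substVal x w)
  | .handler h, x, w => .handler (h.substVal x w)
  | .lamSkel s v, x, w => .lamSkel s (v.substVal x w)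
  | .appSkel v τ, x, w => .appSkel (v.substVal x w) τ
  | .lamTy a τ v, x, w => .lamTy a τ (v.substVal x w)
  | .appTy v T, x, w => .appTy (v.substVal x w) T
  | .lamDirt d v, x, w => .lamDirt d (v.substVal x w)
  | .appDirt v Δ, x, w => .appDirt (v.substVal x w) Δ
  | .lamCo o π v, x, w => .lamCo o π (v.substVal x w)
  | .appCo v γ, x, w => .appCo (v.substVal x w) γ
  | .cast v γ, x, w => .cast (v.substVal x w) γ
def Handler.substVal : Handler → ℕ → Value → Handler
  | .mk y T cr cls, x, w => .mk y T (cr.substVal x w) (cls.substVal x w)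
def OpClauses.substVal : OpClauses → ℕ → Value → OpClauses
  | .nil, _, _ => .nil
  | .cons op y k c rest, x, w => .cons op y k (c.substVal x w) (rest.substVal x w)
def Comp.substVal : Comp → ℕ → Value → Comp
  | .ret v, x, w => .ret (v.substVal x w)
  | .opCall op v y T c, x, w => .opCall op (v.substVal x w) y T (c.substVal x w)
  | .doIn y c1 c2, x, w => .doIn y (c1.substVal x w) (c2.substVal x w)
  | .handle v c, x, w => .handle (v.substVal x w) (c.substVal x w)
  | .app v1 v2, x, w => .app (v1.substVal x w) (v2.substVal x w)
  | .letIn y v c, x, w => .letIn y (v.substVal x w) (c.substVal x w)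
  | .cast c γ, x, w => .cast (c.substVal x w) γ
end

/-! ## Typing -/

/-- Global operation signature Σ. -/
def Sig := Op → Option (VTy × VTy)

/-- Typing environment entries. -/
inductive Entry : Type
  | skel    : ℕ → Entry
  | tyVar   : ℕ → Skel → Entry
  | dirtVar : ℕ → Entry
  | termVar : ℕ → VTy → Entry
  | coVar   : ℕ → SimpleCt → Entry

abbrev Env := List Entry

/-- Membership of an operation in a dirt. -/
inductive Dirt.Mem : Op → Dirt → Prop
  | head : Dirt.Mem op (.cons op Δ)
  | tail : Dirt.Mem op Δ → Dirt.Mem op (.cons op' Δ)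

/-- Extend a dirt with a finite set of operations 𝒪. -/
def opsDirt (O : List Op) (Δ : Dirt) : Dirt := O.foldr .cons Δ

/-- Coercion typing  Γ ⊢co γ : ρ. -/
inductive CoTyping : Env → Coercion → Ct → Prop
  | var : Entry.coVar ω π ∈ Γ → CoTyping Γ (.var ω) (.simple π)
  | unit : CoTyping Γ .unit (.simple (.vle .unit .unit))
  | reflVar : Entry.tyVar α τ ∈ Γ →
      CoTyping Γ (.reflVar α) (.simple (.vle (.var α) (.var α)))
  | reflDirt : CoTyping Γ (.reflDirt Δ) (.simple (.dle Δ Δ))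
  | arrow : CoTyping Γ γ1 (.simple (.vle T2 T1)) → CoTyping Γ γ2 (.cle C1 C2) →
      CoTyping Γ (.arrow γ1 γ2) (.simple (.vle (.arrow T1 C1) (.arrow T2 C2)))
  | handler : CoTyping Γ γ1 (.cle C3 C1) → CoTyping Γ γ2 (.cle C2 C4) →
      CoTyping Γ (.handler γ1 γ2) (.simple (.vle (.handler C1 C2) (.handler C3 C4)))
  | allSkel : CoTyping (Entry.skel ς :: Γ) γ (.simple (.vle T1 T2)) →
      CoTyping Γ (.allSkel ς γ) (.simple (.vle (.allSkel ς T1) (.allSkel ς T2)))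
  | allTy : CoTyping (Entry.tyVar α τ :: Γ) γ (.simple (.vle T1 T2)) →
      CoTyping Γ (.allTy α τ γ) (.simple (.vle (.allTy α τ T1) (.allTy α τ T2)))
  | allDirt : CoTyping (Entry.dirtVar δ :: Γ) γ (.simple (.vle T1 T2)) →
      CoTyping Γ (.allDirt δ γ) (.simple (.vle (.allDirt δ T1) (.allDirt δ T2)))
  | qual : CoTyping Γ γ (.simple (.vle T1 T2)) →
      CoTyping Γ (.qual π γ) (.simple (.vle (.qual π T1) (.qual π T2)))
  | emptyDirt : CoTyping Γ (.emptyDirt Δ) (.simple (.dle .empty Δ))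
  | bang : CoTyping Γ γ1 (.simple (.vle T1 T2)) → CoTyping Γ γ2 (.simple (.dle Δ1 Δ2)) →
      CoTyping Γ (.bang γ1 γ2) (.cle (.bang T1 Δ1) (.bang T2 Δ2))
  | consOp : CoTyping Γ γ (.simple (.dle Δ1 Δ2)) →
      CoTyping Γ (.consOp op γ) (.simple (.dle (.cons op Δ1) (.cons op Δ2)))

mutual
/-- Value typing  Γ ⊢v v : T. -/
inductive VTyping (sg : Sig) : Env → Value → VTy → Prop
  | var : Entry.termVar x T ∈ Γ → VTyping sg Γ (.var x) T
  | unit : VTyping sg Γ .unit .unit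
  | lam : CTyping sg (Entry.termVar x T :: Γ) c C →
      VTyping sg Γ (.lam x T c) (.arrow T C)
  | cast : VTyping sg Γ v T1 → CoTyping Γ γ (.simple (.vle T1 T2)) →
      VTyping sg Γ (.cast v γ) T2
  | lamSkel : VTyping sg (Entry.skel ς :: Γ) v T →
      VTyping sg Γ (.lamSkel ς v) (.allSkel ς T)
  | lamTy : VTyping sg (Entry.tyVar α τ :: Γ) v T →
      VTyping sg Γ (.lamTy α τ v) (.allTy α τ T)
  | lamDirt : VTyping sg (Entry.dirtVar δ :: Γ) v T →
      VTyping sg Γ (.lamDirt δ v) (.allDirt δ T)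
  | lamCo : VTyping sg (Entry.coVar ω π :: Γ) v T →
      VTyping sg Γ (.lamCo ω π v) (.qual π T)
  | appCo : VTyping sg Γ v (.qual π T) → CoTyping Γ γ (.simple π) →
      VTyping sg Γ (.appCo v γ) T
  | handler : CTyping sg (Entry.termVar x Tx :: Γ) cr (.bang T Δ) →
      ClausesTyping sg Γ cls T Δ O →
      VTyping sg Γ (.handler (.mk x Tx cr cls))
        (.handler (.bang Tx (opsDirt O Δ)) (.bang T Δ))
  | appSkel : VTyping sg Γ v (.allSkel ς T) →
      VTyping sg Γ (.appSkel v τ) (T.substSkel ς τ)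
  | appTy : VTyping sg Γ v (.allTy α τ T1) →
      VTyping sg Γ (.appTy v T2) (T1.substTy α T2)
  | appDirt : VTyping sg Γ v (.allDirt δ T) →
      VTyping sg Γ (.appDirt v Δ) (T.substDirt δ Δ)

/-- Typing for the operation clauses of a handler; the last argument collects
    the set 𝒪 of handled operations. -/
inductive ClausesTyping (sg : Sig) : Env → OpClauses → VTy → Dirt → List Op → Prop
  | nil : ClausesTyping sg Γ .nil T Δ []
  | cons : sg op = some (T1, T2) →
      CTyping sg (Entry.termVar k (.arrow T2 (.bang T Δ)) :: Entry.termVar x T1 :: Γ)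
        c (.bang T Δ) →
      ClausesTyping sg Γ rest T Δ ops →
      ClausesTyping sg Γ (.cons op x k c rest) T Δ (op :: ops)

/-- Computation typing  Γ ⊢c c : C. -/
inductive CTyping (sg : Sig) : Env → Comp → CTy → Prop
  | app : VTyping sg Γ v1 (.arrow T C) → VTyping sg Γ v2 T →
      CTyping sg Γ (.app v1 v2) C
  | letIn : VTyping sg Γ v T → CTyping sg (Entry.termVar x T :: Γ) c C →
      CTyping sg Γ (.letIn x v c) C
  | ret : VTyping sg Γ v T → CTyping sg Γ (.ret v) (.bang T .empty)
  | doIn : CTyping sg Γ c1 (.bang T1 Δ) →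
      CTyping sg (Entry.termVar x T1 :: Γ) c2 (.bang T2 Δ) →
      CTyping sg Γ (.doIn x c1 c2) (.bang T2 Δ)
  | opCall : sg op = some (T1, T2) → VTyping sg Γ v T1 →
      CTyping sg (Entry.termVar y T2 :: Γ) c (.bang T Δ) → Dirt.Mem op Δ →
      CTyping sg Γ (.opCall op v y T2 c) (.bang T Δ)
  | handle : VTyping sg Γ v (.handler C1 C2) → CTyping sg Γ c C1 →
      CTyping sg Γ (.handle v c) C2
  | cast : CTyping sg Γ c C1 → CoTyping Γ γ (.cle C1 C2) →
      CTyping sg Γ (.cast c γ) C2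
end

/-! ## Results -/

/-- Terminal values v^T. -/
inductive TerminalValue : Value → Prop
  | unit : TerminalValue .unit
  | lam : TerminalValue (.lam x T c)
  | handler : TerminalValue (.handler h)
  | lamSkel : TerminalValue (.lamSkel ς v)
  | lamTy : TerminalValue (.lamTy α τ v)
  | lamDirt : TerminalValue (.lamDirt δ v)
  | lamCo : TerminalValue (.lamCo ω π v)

/-- Value results v^R. -/
inductive ValueResult : Value → Prop
  | terminal : TerminalValue v → ValueResult v
  | castArrow : ValueResult v → ValueResult (.cast v (.arrow γ1 γ2))
  | castHandler : ValueResult v → ValueResult (.cast v (.handler γ1 γ2))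
  | castAllSkel : ValueResult v → ValueResult (.cast v (.allSkel ς γ))
  | castAllTy : ValueResult v → ValueResult (.cast v (.allTy α τ γ))
  | castAllDirt : ValueResult v → ValueResult (.cast v (.allDirt δ γ))
  | castQual : ValueResult v → ValueResult (.cast v (.qual π γ))

/-- Terminal computations c^T. -/
inductive TerminalComp : Comp → Prop
  | ret : ValueResult v → TerminalComp (.ret v)
  | cast : TerminalComp c → TerminalComp (.cast c (.bang γ1 γ2))

/-- Computation results c^R. -/
inductive CompResult : Comp → Prop
  | terminal : TerminalComp c → CompResult c
  | opCall : ValueResult v → CompResult (.opCall op v y T c)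

/-- `CastedRet c w`: c is `return v^R` wrapped in a stack of computation
    coercion casts (γ₁!γ₁') … (γₙ!γₙ'), and `w` is v^R cast by the pure
    parts γ₁ … γₙ. -/
inductive CastedRet : Comp → Value → Prop
  | ret : ValueResult v → CastedRet (.ret v) v
  | cast : CastedRet c w → CastedRet (.cast c (.bang γ1 γ2)) (.cast w γ1)

/-- Operation clause lookup in a handler. -/
def OpClauses.find : OpClauses → Op → Option (ℕ × ℕ × Comp)
  | .nil, _ => none
  | .cons op x k c rest, op' => if op = op' then some (x, k, c) else rest.find op'

/-! ## Operational semantics -/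

/-- Small-step relation on values  v ⤳v v'. -/
inductive VStep : Value → Value → Prop
  | castCong : VStep v v' → VStep (.cast v γ) (.cast v' γ)
  | pushUnit : ValueResult v → VStep (.cast v .unit) v
  | appSkelCong : VStep v v' → VStep (.appSkel v τ) (.appSkel v' τ)
  | appTyCong : VStep v v' → VStep (.appTy v T) (.appTy v' T)
  | appDirtCong : VStep v v' → VStep (.appDirt v Δ) (.appDirt v' Δ)
  | appCoCong : VStep v v' → VStep (.appCo v γ) (.appCo v' γ)
  | pushSkel : ValueResult v →
      VStep (.appSkel (.cast v (.allSkel ς γ)) τ)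
            (.cast (.appSkel v τ) (γ.substSkel ς τ))
  | pushTy : ValueResult v →
      VStep (.appTy (.cast v (.allTy α τ γ)) T)
            (.cast (.appTy v T) (γ.substTy α T))
  | pushDirt : ValueResult v →
      VStep (.appDirt (.cast v (.allDirt δ γ)) Δ)
            (.cast (.appDirt v Δ) (γ.substDirt δ Δ))
  | pushQual : ValueResult v →
      VStep (.appCo (.cast v (.qual π γ1)) γ2) (.cast (.appCo v γ2) γ1)
  | betaSkel : VStep (.appSkel (.lamSkel ς v) τ) (v.mapTy (skelSub ς τ))
  | betaTy : VStep (.appTy (.lamTy α τ v) T) (v.mapTy (tySub α T))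
  | betaDirt : VStep (.appDirt (.lamDirt δ v) Δ) (v.mapTy (dirtSub δ Δ))
  | betaCo : VStep (.appCo (.lamCo ω π v) γ) (v.mapTy (coSub ω γ))

/-- Small-step relation on computations  c ⤳c c'. -/
inductive CStep : Comp → Comp → Prop
  | castCong : CStep c c' → CStep (.cast c γ) (.cast c' γ)
  | appCong1 : VStep v1 v1' → CStep (.app v1 v2) (.app v1' v2)
  | appCong2 : TerminalValue v1 → VStep v2 v2' → CStep (.app v1 v2) (.app v1 v2')
  | pushApp : ValueResult v1 →
      CStep (.app (.cast v1 (.arrow γ1 γ2)) v2)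
            (.cast (.app v1 (.cast v2 γ1)) γ2)
  | betaApp : ValueResult w → CStep (.app (.lam x T c) w) (c.substVal x w)
  | letCong : VStep v v' → CStep (.letIn x v c) (.letIn x v' c)
  | betaLet : ValueResult w → CStep (.letIn x w c) (c.substVal x w)
  | retCong : VStep v v' → CStep (.ret v) (.ret v')
  | opCong : VStep v v' → CStep (.opCall op v y T c) (.opCall op v' y T c)
  | pushOp : ValueResult v →
      CStep (.cast (.opCall op v y T c) γ) (.opCall op v y T (.cast c γ))
  | doCong : CStep c1 c1' → CStep (.doIn x c1 c2) (.doIn x c1' c2)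
  | doRet : CastedRet c1 w → CStep (.doIn x c1 c2) (c2.substVal x w)
  | doOp : ValueResult v →
      CStep (.doIn x (.opCall op v y T c1) c2)
            (.opCall op v y T (.doIn x c1 c2))
  | handleCong1 : VStep v v' → CStep (.handle v c) (.handle v' c)
  | pushHandle : ValueResult v →
      CStep (.handle (.cast v (.handler γ1 γ2)) c)
            (.cast (.handle v (.cast c γ1)) γ2)
  | handleCong2 : TerminalValue v → CStep c c' → CStep (.handle v c) (.handle v c')
  | handleRet : CastedRet c w →
      CStep (.handle (.handler (.mk x Tx cr cls)) c) (cr.substVal x w)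
  | handleOp1 : OpClauses.find cls op = some (x', k, cop) → ValueResult v →
      CStep (.handle (.handler (.mk x Tx cr cls)) (.opCall op v y T c))
            ((cop.substVal x' v).substVal k
              (.lam y T (.handle (.handler (.mk x Tx cr cls)) c)))
  | handleOp2 : OpClauses.find cls op = none → ValueResult v →
      CStep (.handle (.handler (.mk x Tx cr cls)) (.opCall op v y T c))
            (.opCall op v y T (.handle (.handler (.mk x Tx cr cls)) c))

end ExEff

/-! # ImpEff: the implicitly-typed source calculus, with typing-directed
    elaboration into ExEff. -/

namespace ImpEff

open ExEff (Skel Dirt Op)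

mutual
/-- ImpEff value types A. -/
inductive VTy : Type
  | var     : ℕ → VTy
  | unit    : VTy
  | arrow   : VTy → CTy → VTy
  | handler : CTy → CTy → VTy
/-- ImpEff computation types C = A ! Δ. -/
inductive CTy : Type
  | bang : VTy → Dirt → CTy
/-- ImpEff simple constraints π. -/
inductive SimpleCt : Type
  | vle : VTy → VTy → SimpleCt
  | dle : Dirt → Dirt → SimpleCt
end

/-- ImpEff constraints ρ. -/
inductive Ct : Type
  | simple : SimpleCt → Ct
  | cle    : CTy → CTy → Ct

/-- Polytypes S = ∀ς̄. ∀(α:τ)̄. ∀δ̄. π̄ ⇒ A. -/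
structure Scheme where
  skels : List ℕ
  tys   : List (ℕ × Skel)
  dirts : List ℕ
  cts   : List SimpleCt
  body  : VTy

/-- A monomorphic type seen as a scheme. -/
def Scheme.mono (A : VTy) : Scheme := ⟨[], [], [], [], A⟩

mutual
def VTy.substTy : VTy → ℕ → VTy → VTy
  | .var a, α, A' => if a = α then A' else .var a
  | .unit, _, _ => .unit
  | .arrow A C, α, A' => .arrow (A.substTy α A') (C.substTy α A')
  | .handler C D, α, A' => .handler (C.substTy α A') (D.substTy α A')
def CTy.substTy : CTy → ℕ → VTy → CTy
  | .bang A Δ, α, A' => .bang (A.substTy α A') Δ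
def SimpleCt.substTy : SimpleCt → ℕ → VTy → SimpleCt
  | .vle A1 A2, α, A' => .vle (A1.substTy α A') (A2.substTy α A')
  | .dle Δ1 Δ2, _, _ => .dle Δ1 Δ2
end

mutual
def VTy.substDirt : VTy → ℕ → Dirt → VTy
  | .var a, _, _ => .var a
  | .unit, _, _ => .unit
  | .arrow A C, δ, Δ' => .arrow (A.substDirt δ Δ') (C.substDirt δ Δ')
  | .handler C D, δ, Δ' => .handler (C.substDirt δ Δ') (D.substDirt δ Δ')
def CTy.substDirt : CTy → ℕ → Dirt → CTy
  | .bang A Δ, δ, Δ' => .bang (A.substDirt δ Δ') (Δ.subst δ Δ')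
def SimpleCt.substDirt : SimpleCt → ℕ → Dirt → SimpleCt
  | .vle A1 A2, δ, Δ' => .vle (A1.substDirt δ Δ') (A2.substDirt δ Δ')
  | .dle Δ1 Δ2, δ, Δ' => .dle (Δ1.subst δ Δ') (Δ2.subst δ Δ')
end

/-- Simultaneous instantiation of type and dirt variables. -/
def VTy.multiSubst (A : VTy) (tys : List (ℕ × VTy)) (dirts : List (ℕ × Dirt)) : VTy :=
  dirts.foldl (fun A p => A.substDirt p.1 p.2)
    (tys.foldl (fun A p => A.substTy p.1 p.2) A)

def SimpleCt.multiSubst (π : SimpleCt) (tys : List (ℕ × VTy))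
    (dirts : List (ℕ × Dirt)) : SimpleCt :=
  dirts.foldl (fun π p => π.substDirt p.1 p.2)
    (tys.foldl (fun π p => π.substTy p.1 p.2) π)

mutual
/-- ImpEff values. -/
inductive Value : Type
  | var     : ℕ → Value
  | unit    : Value
  | lam     : ℕ → Comp → Value
  | handler : HandlerI → Value
inductive HandlerI : Type
  | mk : ℕ → Comp → Clauses → HandlerI
inductive Clauses : Type
  | nil  : Clauses
  | cons : Op → ℕ → ℕ → Comp → Clauses → Clauses
/-- ImpEff computations. -/
inductive Comp : Type
  | ret    : Value → Comp
  | opCall : Op → Value → ℕ → Comp → Comp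
  | doIn   : ℕ → Comp → Comp → Comp
  | handle : Value → Comp → Comp
  | app    : Value → Value → Comp
  | letIn  : ℕ → Value → Comp → Comp
end

/-- ImpEff typing environment entries. -/
inductive Entry : Type
  | skel    : ℕ → Entry
  | tyVar   : ℕ → Skel → Entry
  | dirtVar : ℕ → Entry
  | termVar : ℕ → Scheme → Entry
  | coVar   : ℕ → SimpleCt → Entry

abbrev Env := List Entry

/-- ImpEff operation signature. -/
def Sig := Op → Option (VTy × VTy)

/-! ## Elaboration of types into ExEff -/

mutual
def elabVTy : VTy → ExEff.VTy
  | .var a => .var a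
  | .unit => .unit
  | .arrow A C => .arrow (elabVTy A) (elabCTy C)
  | .handler C D => .handler (elabCTy C) (elabCTy D)
def elabCTy : CTy → ExEff.CTy
  | .bang A Δ => .bang (elabVTy A) Δ
end

def elabSimpleCt : SimpleCt → ExEff.SimpleCt
  | .vle A1 A2 => .vle (elabVTy A1) (elabVTy A2)
  | .dle Δ1 Δ2 => .dle Δ1 Δ2

def elabCt : Ct → ExEff.Ct
  | .simple π => .simple (elabSimpleCt π)
  | .cle C D => .cle (elabCTy C) (elabCTy D)

def elabScheme (S : Scheme) : ExEff.VTy :=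
  S.skels.foldr .allSkel
    (S.tys.foldr (fun p T => .allTy p.1 p.2 T)
      (S.dirts.foldr .allDirt
        (S.cts.foldr (fun π T => .qual (elabSimpleCt π) T) (elabVTy S.body))))

def elabEntry : Entry → ExEff.Entry
  | .skel s => .skel s
  | .tyVar a τ => .tyVar a τ
  | .dirtVar d => .dirtVar d
  | .termVar x S => .termVar x (elabScheme S)
  | .coVar w π => .coVar w (elabSimpleCt π)

def elabEnv : Env → ExEff.Env := List.map elabEntry

def elabSig (sg : Sig) : ExEff.Sig :=
  fun op => (sg op).map fun p => (elabVTy p.1, elabVTy p.2)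

/-! ## Constraint entailment  Γ ⊢co γ : ρ -/

inductive Entails : Env → ExEff.Coercion → Ct → Prop
  | var : Entry.coVar ω π ∈ Γ → Entails Γ (.var ω) (.simple π)
  | unit : Entails Γ .unit (.simple (.vle .unit .unit))
  | reflVar : Entry.tyVar α τ ∈ Γ →
      Entails Γ (.reflVar α) (.simple (.vle (.var α) (.var α)))
  | reflDirt : Entails Γ (.reflDirt Δ) (.simple (.dle Δ Δ))
  | arrow : Entails Γ γ1 (.simple (.vle B A)) → Entails Γ γ2 (.cle C D) →
      Entails Γ (.arrow γ1 γ2) (.simple (.vle (.arrow A C) (.arrow B D)))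
  | handler : Entails Γ γ1 (.cle C2 C1) → Entails Γ γ2 (.cle D1 D2) →
      Entails Γ (.handler γ1 γ2) (.simple (.vle (.handler C1 D1) (.handler C2 D2)))
  | comp : Entails Γ γ1 (.simple (.vle A1 A2)) → Entails Γ γ2 (.simple (.dle Δ1 Δ2)) →
      Entails Γ (.bang γ1 γ2) (.cle (.bang A1 Δ1) (.bang A2 Δ2))
  | dirtNil : Entails Γ (.emptyDirt Δ) (.simple (.dle .empty Δ))
  | dirtOp : Entails Γ γ (.simple (.dle Δ1 Δ2)) →
      Entails Γ (.consOp op γ) (.simple (.dle (.cons op Δ1) (.cons op Δ2)))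

/-! ## Typing with elaboration into ExEff -/

/-- Apply a polymorphic variable to instantiation arguments in ExEff. -/
def applyAll (v : ExEff.Value) (τs : List Skel) (Ts : List ExEff.VTy)
    (Δs : List Dirt) (γs : List ExEff.Coercion) : ExEff.Value :=
  γs.foldl .appCo
    (Δs.foldl .appDirt (Ts.foldl .appTy (τs.foldl .appSkel v)))

/-- Generalization: the environment entries bound by a scheme. -/
def genEntries (S : Scheme) (ωs : List ℕ) : List Entry :=
  S.skels.map .skel ++ S.tys.map (fun p => .tyVar p.1 p.2) ++
    S.dirts.map .dirtVar ++ (ωs.zip S.cts).map (fun p => .coVar p.1 p.2)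

/-- Generalization: wrap an elaborated value in the corresponding ExEff
    skeleton/type/dirt/coercion abstractions. -/
def genWrap (S : Scheme) (ωs : List ℕ) (v : ExEff.Value) : ExEff.Value :=
  S.skels.foldr .lamSkel
    (S.tys.foldr (fun p w => .lamTy p.1 p.2 w)
      (S.dirts.foldr .lamDirt
        ((ωs.zip S.cts).foldr (fun p w => .lamCo p.1 (elabSimpleCt p.2) w) v)))

mutual
/-- ImpEff value typing with elaboration:  Γ ⊢v v : A ↝ v'. -/
inductive ElabVal (sg : Sig) : Env → Value → VTy → ExEff.Value → Prop
  | var : Entry.termVar x S ∈ Γ →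
      τs.length = S.skels.length →
      As.length = S.tys.length →
      Δs.length = S.dirts.length →
      σty = (S.tys.map Prod.fst).zip As →
      σdirt = S.dirts.zip Δs →
      List.Forall₂
        (fun γ π => Entails Γ γ (.simple (π.multiSubst σty σdirt))) γs S.cts →
      ElabVal sg Γ (.var x) (S.body.multiSubst σty σdirt)
        (applyAll (.var x) τs (As.map elabVTy) Δs γs)
  | castV : ElabVal sg Γ v A v' → Entails Γ γ (.simple (.vle A B)) →
      ElabVal sg Γ v B (.cast v' γ)
  | unit : ElabVal sg Γ .unit .unit .unit
  | lam : ElabComp sg (Entry.termVar x (Scheme.mono A) :: Γ) c C c' →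
      ElabVal sg Γ (.lam x c) (.arrow A C) (.lam x (elabVTy A) c')
  | handler :
      ElabComp sg (Entry.termVar x (Scheme.mono A) :: Γ) cr (.bang B Δ) cr' →
      ElabClauses sg Γ cls B Δ cls' O →
      ElabVal sg Γ (.handler (.mk x cr cls))
        (.handler (.bang A (ExEff.opsDirt O Δ)) (.bang B Δ))
        (.handler (.mk x (elabVTy A) cr' cls'))

/-- Elaboration of the operation clauses of a handler; the last argument
    collects the set 𝒪 of handled operations. -/
inductive ElabClauses (sg : Sig) :
    Env → Clauses → VTy → Dirt → ExEff.OpClauses → List Op → Prop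
  | nil : ElabClauses sg Γ .nil B Δ .nil []
  | cons : sg op = some (Aop, Bop) →
      ElabComp sg
        (Entry.termVar k (Scheme.mono (.arrow Bop (.bang B Δ))) ::
          Entry.termVar x (Scheme.mono Aop) :: Γ) c (.bang B Δ) c' →
      ElabClauses sg Γ rest B Δ rest' ops →
      ElabClauses sg Γ (.cons op x k c rest) B Δ (.cons op x k c' rest') (op :: ops)

/-- ImpEff computation typing with elaboration:  Γ ⊢c c : C ↝ c'. -/
inductive ElabComp (sg : Sig) : Env → Comp → CTy → ExEff.Comp → Prop
  | castC : ElabComp sg Γ c C1 c' → Entails Γ γ (.cle C1 C2) →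
      ElabComp sg Γ c C2 (.cast c' γ)
  | app : ElabVal sg Γ v1 (.arrow A C) v1' → ElabVal sg Γ v2 A v2' →
      ElabComp sg Γ (.app v1 v2) C (.app v1' v2')
  | letIn : ωs.length = S.cts.length →
      ElabVal sg (genEntries S ωs ++ Γ) v S.body v' →
      ElabComp sg (Entry.termVar x S :: Γ) c C c' →
      ElabComp sg Γ (.letIn x v c) C (.letIn x (genWrap S ωs v') c')
  | ret : ElabVal sg Γ v A v' →
      ElabComp sg Γ (.ret v) (.bang A .empty) (.ret v')
  | opCall : sg op = some (Aop, Bop) → ElabVal sg Γ v Aop v' →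
      ElabComp sg (Entry.termVar y (Scheme.mono Bop) :: Γ) c (.bang A Δ) c' →
      ExEff.Dirt.Mem op Δ →
      ElabComp sg Γ (.opCall op v y c) (.bang A Δ)
        (.opCall op v' y (elabVTy Bop) c')
  | doIn : ElabComp sg Γ c1 (.bang A Δ) c1' →
      ElabComp sg (Entry.termVar x (Scheme.mono A) :: Γ) c2 (.bang B Δ) c2' →
      ElabComp sg Γ (.doIn x c1 c2) (.bang B Δ) (.doIn x c1' c2')
  | handle : ElabVal sg Γ v (.handler C D) v' → ElabComp sg Γ c C c' →
      ElabComp sg Γ (.handle v c) D (.handle v' c')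
end

end ImpEff

/-! Elaboration turns every implicit step of an ImpEff derivation into an explicit ExEff
construct, so type preservation is a simultaneous induction on the elaboration derivations of
values, handler clauses and computations in which each rule is matched by the corresponding ExEff
rule: constraint entailment is ExEff coercion typing, and elaborating types commutes with
substitution. Only generalization and instantiation need work. A let-bound value elaborates to a
stack of skeleton, type, dirt and coercion abstractions whose type is `elab(S)`, and an occurrence
of a polymorphic variable peels these quantifiers off again one application at a time; skeleton
instantiation leaves the rest of the type unchanged because elaborated ImpEff types contain no
skeleton variables. -/

namespace ExEff

theorem CoTyping.mono {Γ Γ' : Env} {γ : Coercion} {ρ : Ct} (h : CoTyping Γ γ ρ)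
    (hΓ : Γ ⊆ Γ') : CoTyping Γ' γ ρ := by
  induction h generalizing Γ' <;> constructor <;> solve_by_elim [List.cons_subset_cons]

theorem VTyping.mono {sg : Sig} {Γ Γ' : Env} {v : Value} {T : VTy} (h : VTyping sg Γ v T)
    (hΓ : Γ ⊆ Γ') : VTyping sg Γ' v T := by
  refine VTyping.rec
    (motive_1 := fun Γ v T _ => ∀ {Γ' : Env}, Γ ⊆ Γ' → VTyping sg Γ' v T)
    (motive_2 := fun Γ cls T Δ O _ =>
      ∀ {Γ' : Env}, Γ ⊆ Γ' → ClausesTyping sg Γ' cls T Δ O)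
    (motive_3 := fun Γ c C _ => ∀ {Γ' : Env}, Γ ⊆ Γ' → CTyping sg Γ' c C)
    ?_ ?_ ?_ ?_ ?_ ?_ ?_ ?_ ?_ ?_ ?_ ?_ ?_ ?_ ?_ ?_ ?_ ?_ ?_ ?_ ?_ ?_ h hΓ <;>
  · intros
    constructor <;> solve_by_elim [List.cons_subset_cons, CoTyping.mono]

namespace VTy

def allSkels (ss : List ℕ) (T : VTy) : VTy := ss.foldr allSkel T

def allTys (tys : List (ℕ × Skel)) (T : VTy) : VTy := tys.foldr (fun p => allTy p.1 p.2) T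

def allDirts (ds : List ℕ) (T : VTy) : VTy := ds.foldr allDirt T

def quals (πs : List SimpleCt) (T : VTy) : VTy := πs.foldr qual T

def substSkels (σ : List (ℕ × Skel)) (T : VTy) : VTy :=
  σ.foldl (fun T p => T.substSkel p.1 p.2) T

def substTys (σ : List (ℕ × VTy)) (T : VTy) : VTy := σ.foldl (fun T p => T.substTy p.1 p.2) T

def substDirts (σ : List (ℕ × Dirt)) (T : VTy) : VTy :=
  σ.foldl (fun T p => T.substDirt p.1 p.2) T

end VTy

namespace SimpleCt

def substTys (σ : List (ℕ × VTy)) (π : SimpleCt) : SimpleCt :=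
  σ.foldl (fun π p => π.substTy p.1 p.2) π

def substDirts (σ : List (ℕ × Dirt)) (π : SimpleCt) : SimpleCt :=
  σ.foldl (fun π p => π.substDirt p.1 p.2) π

end SimpleCt

namespace VTy

variable (ς : ℕ) (τ : Skel) (α : ℕ) (B : VTy) (δ : ℕ) (Δ : Dirt) (T : VTy)

theorem substSkel_allSkels (ss : List ℕ) :
    (allSkels ss T).substSkel ς τ = allSkels ss (T.substSkel ς τ) := by
  induction ss <;> simp_all [allSkels, substSkel]

theorem substSkel_allTys (tys : List (ℕ × Skel)) :
    (allTys tys T).substSkel ς τ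
      = allTys (tys.map fun p => (p.1, p.2.subst ς τ)) (T.substSkel ς τ) := by
  induction tys <;> simp_all [allTys, substSkel]

theorem substSkel_allDirts (ds : List ℕ) :
    (allDirts ds T).substSkel ς τ = allDirts ds (T.substSkel ς τ) := by
  induction ds <;> simp_all [allDirts, substSkel]

theorem substSkel_quals (πs : List SimpleCt) :
    (quals πs T).substSkel ς τ = quals (πs.map (·.substSkel ς τ)) (T.substSkel ς τ) := by
  induction πs <;> simp_all [quals, substSkel]

theorem substTy_allTys (tys : List (ℕ × Skel)) :
    (allTys tys T).substTy α B = allTys tys (T.substTy α B) := by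
  induction tys <;> simp_all [allTys, substTy]

theorem substTy_allDirts (ds : List ℕ) :
    (allDirts ds T).substTy α B = allDirts ds (T.substTy α B) := by
  induction ds <;> simp_all [allDirts, substTy]

theorem substTy_quals (πs : List SimpleCt) :
    (quals πs T).substTy α B = quals (πs.map (·.substTy α B)) (T.substTy α B) := by
  induction πs <;> simp_all [quals, substTy]

theorem substDirt_allDirts (ds : List ℕ) :
    (allDirts ds T).substDirt δ Δ = allDirts ds (T.substDirt δ Δ) := by
  induction ds <;> simp_all [allDirts, substDirt]

theorem substDirt_quals (πs : List SimpleCt) :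
    (quals πs T).substDirt δ Δ = quals (πs.map (·.substDirt δ Δ)) (T.substDirt δ Δ) := by
  induction πs <;> simp_all [quals, substDirt]


theorem substSkels_allTys_of_substSkel_eq (σ : List (ℕ × Skel)) (tys : List (ℕ × Skel))
    {R : VTy} (hR : ∀ ς τ, R.substSkel ς τ = R) :
    ∃ tys' : List (ℕ × Skel), tys'.map Prod.fst = tys.map Prod.fst ∧
      (allTys tys R).substSkels σ = allTys tys' R := by
  induction σ generalizing tys with
  | nil => exact ⟨tys, rfl, rfl⟩
  | cons p σ ih =>
    obtain ⟨tys', hfst, h⟩ := ih (tys.map fun q => (q.1, q.2.subst p.1 p.2))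
    refine ⟨tys', by simpa [Function.comp_def] using hfst, ?_⟩
    rwa [substSkels, List.foldl_cons, substSkel_allTys, hR]

theorem substTys_allDirts (σ : List (ℕ × VTy)) (ds : List ℕ) :
    (allDirts ds T).substTys σ = allDirts ds (T.substTys σ) := by
  induction σ generalizing T <;> simp_all [substTys, substTy_allDirts]

theorem substTys_quals (σ : List (ℕ × VTy)) (πs : List SimpleCt) :
    (quals πs T).substTys σ = quals (πs.map (·.substTys σ)) (T.substTys σ) := by
  induction σ generalizing πs T <;>
    simp_all [substTys, SimpleCt.substTys, substTy_quals, Function.comp_def]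

theorem substDirts_quals (σ : List (ℕ × Dirt)) (πs : List SimpleCt) :
    (quals πs T).substDirts σ = quals (πs.map (·.substDirts σ)) (T.substDirts σ) := by
  induction σ generalizing πs T <;>
    simp_all [substDirts, SimpleCt.substDirts, substDirt_quals, Function.comp_def]

end VTy

namespace VTyping

variable {sg : Sig} {Γ : Env}

theorem foldl_appSkel : ∀ {ss : List ℕ} {τs : List Skel} {v : Value} {T : VTy},
    ss.length = τs.length → VTyping sg Γ v (T.allSkels ss) →
    VTyping sg Γ (τs.foldl .appSkel v) (T.substSkels (ss.zip τs))
  | [], [], _, _, _, h => h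
  | s :: ss, τ :: τs, v, T, hlen, h => by
    have h' : VTyping sg Γ (v.appSkel τ) ((T.allSkels ss).substSkel s τ) := .appSkel h
    rw [VTy.substSkel_allSkels] at h'
    exact foldl_appSkel (τs := τs) (by simpa using hlen) h'

theorem foldl_appTy : ∀ {tys : List (ℕ × Skel)} {Ts : List VTy} {v : Value} {T : VTy},
    tys.length = Ts.length → VTyping sg Γ v (T.allTys tys) →
    VTyping sg Γ (Ts.foldl .appTy v) (T.substTys ((tys.map Prod.fst).zip Ts))
  | [], [], _, _, _, h => h
  | p :: tys, T' :: Ts, v, T, hlen, h => by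
    have h' : VTyping sg Γ (v.appTy T') ((T.allTys tys).substTy p.1 T') := .appTy h
    rw [VTy.substTy_allTys] at h'
    exact foldl_appTy (Ts := Ts) (by simpa using hlen) h'

theorem foldl_appDirt : ∀ {ds : List ℕ} {Δs : List Dirt} {v : Value} {T : VTy},
    ds.length = Δs.length → VTyping sg Γ v (T.allDirts ds) →
    VTyping sg Γ (Δs.foldl .appDirt v) (T.substDirts (ds.zip Δs))
  | [], [], _, _, _, h => h
  | d :: ds, Δ :: Δs, v, T, hlen, h => by
    have h' : VTyping sg Γ (v.appDirt Δ) ((T.allDirts ds).substDirt d Δ) := .appDirt h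
    rw [VTy.substDirt_allDirts] at h'
    exact foldl_appDirt (Δs := Δs) (by simpa using hlen) h'

theorem foldl_appCo {πs : List SimpleCt} {γs : List Coercion} {v : Value} {T : VTy}
    (hγ : List.Forall₂ (fun γ π => CoTyping Γ γ (.simple π)) γs πs)
    (h : VTyping sg Γ v (T.quals πs)) : VTyping sg Γ (γs.foldl .appCo v) T := by
  induction hγ generalizing v with
  | nil => exact h
  | cons hγ _ ih => exact ih (.appCo h hγ)

theorem foldr_lamSkel : ∀ {ss : List ℕ} {Γ : Env} {v : Value} {T : VTy},
    VTyping sg ((ss.map Entry.skel).reverse ++ Γ) v T →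
    VTyping sg Γ (ss.foldr .lamSkel v) (T.allSkels ss)
  | [], _, _, _, h => h
  | _ :: _, _, _, _, h => .lamSkel (foldr_lamSkel (by simpa using h))

theorem foldr_lamTy : ∀ {tys : List (ℕ × Skel)} {Γ : Env} {v : Value} {T : VTy},
    VTyping sg ((tys.map fun p => Entry.tyVar p.1 p.2).reverse ++ Γ) v T →
    VTyping sg Γ (tys.foldr (fun p => .lamTy p.1 p.2) v) (T.allTys tys)
  | [], _, _, _, h => h
  | _ :: _, _, _, _, h => .lamTy (foldr_lamTy (by simpa using h))

theorem foldr_lamDirt : ∀ {ds : List ℕ} {Γ : Env} {v : Value} {T : VTy},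
    VTyping sg ((ds.map Entry.dirtVar).reverse ++ Γ) v T →
    VTyping sg Γ (ds.foldr .lamDirt v) (T.allDirts ds)
  | [], _, _, _, h => h
  | _ :: _, _, _, _, h => .lamDirt (foldr_lamDirt (by simpa using h))

theorem foldr_lamCo : ∀ {cs : List (ℕ × SimpleCt)} {Γ : Env} {v : Value} {T : VTy},
    VTyping sg ((cs.map fun p => Entry.coVar p.1 p.2).reverse ++ Γ) v T →
    VTyping sg Γ (cs.foldr (fun p => .lamCo p.1 p.2) v) (T.quals (cs.map Prod.snd))
  | [], _, _, _, h => h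
  | _ :: _, _, _, _, h => .lamCo (foldr_lamCo (by simpa using h))

end VTyping

end ExEff

namespace ImpEff

open ExEff (Skel Dirt Op VTyping CoTyping)

mutual
theorem substSkel_elabVTy : ∀ (A : VTy) (ς : ℕ) (τ : Skel),
    (elabVTy A).substSkel ς τ = elabVTy A
  | .var _, _, _ | .unit, _, _ => rfl
  | .arrow A C, ς, τ => by
    simp [elabVTy, ExEff.VTy.substSkel, substSkel_elabVTy A, substSkel_elabCTy C]
  | .handler C D, ς, τ => by
    simp [elabVTy, ExEff.VTy.substSkel, substSkel_elabCTy C, substSkel_elabCTy D]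
theorem substSkel_elabCTy : ∀ (C : CTy) (ς : ℕ) (τ : Skel),
    (elabCTy C).substSkel ς τ = elabCTy C
  | .bang A _, ς, τ => by simp [elabCTy, ExEff.CTy.substSkel, substSkel_elabVTy A]
end

theorem substSkel_elabSimpleCt (π : SimpleCt) (ς : ℕ) (τ : Skel) :
    (elabSimpleCt π).substSkel ς τ = elabSimpleCt π := by
  cases π <;> simp [elabSimpleCt, ExEff.SimpleCt.substSkel, substSkel_elabVTy]

mutual
theorem elabVTy_substTy : ∀ (A : VTy) (α : ℕ) (B : VTy),
    elabVTy (A.substTy α B) = (elabVTy A).substTy α (elabVTy B)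
  | .var a, α, B => by
    simp only [VTy.substTy, elabVTy, ExEff.VTy.substTy]
    split <;> rfl
  | .unit, _, _ => rfl
  | .arrow A C, α, B => by
    simp [elabVTy, VTy.substTy, ExEff.VTy.substTy, elabVTy_substTy A, elabCTy_substTy C]
  | .handler C D, α, B => by
    simp [elabVTy, VTy.substTy, ExEff.VTy.substTy, elabCTy_substTy C, elabCTy_substTy D]
theorem elabCTy_substTy : ∀ (C : CTy) (α : ℕ) (B : VTy),
    elabCTy (C.substTy α B) = (elabCTy C).substTy α (elabVTy B)
  | .bang A _, α, B => by simp [elabCTy, CTy.substTy, ExEff.CTy.substTy, elabVTy_substTy A]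
end

theorem elabSimpleCt_substTy (π : SimpleCt) (α : ℕ) (B : VTy) :
    elabSimpleCt (π.substTy α B) = (elabSimpleCt π).substTy α (elabVTy B) := by
  cases π <;> simp [elabSimpleCt, SimpleCt.substTy, ExEff.SimpleCt.substTy, elabVTy_substTy]

mutual
theorem elabVTy_substDirt : ∀ (A : VTy) (δ : ℕ) (Δ : Dirt),
    elabVTy (A.substDirt δ Δ) = (elabVTy A).substDirt δ Δ
  | .var _, _, _ | .unit, _, _ => rfl
  | .arrow A C, δ, Δ => by
    simp [elabVTy, VTy.substDirt, ExEff.VTy.substDirt, elabVTy_substDirt A, elabCTy_substDirt C]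
  | .handler C D, δ, Δ => by
    simp [elabVTy, VTy.substDirt, ExEff.VTy.substDirt, elabCTy_substDirt C, elabCTy_substDirt D]
theorem elabCTy_substDirt : ∀ (C : CTy) (δ : ℕ) (Δ : Dirt),
    elabCTy (C.substDirt δ Δ) = (elabCTy C).substDirt δ Δ
  | .bang A _, δ, Δ => by simp [elabCTy, CTy.substDirt, ExEff.CTy.substDirt, elabVTy_substDirt A]
end

theorem elabSimpleCt_substDirt (π : SimpleCt) (δ : ℕ) (Δ : Dirt) :
    elabSimpleCt (π.substDirt δ Δ) = (elabSimpleCt π).substDirt δ Δ := by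
  cases π <;> simp [elabSimpleCt, SimpleCt.substDirt, ExEff.SimpleCt.substDirt, elabVTy_substDirt]

theorem elabVTy_multiSubst (A : VTy) (σty : List (ℕ × VTy)) (σdirt : List (ℕ × Dirt)) :
    elabVTy (A.multiSubst σty σdirt)
      = ((elabVTy A).substTys (σty.map (Prod.map id elabVTy))).substDirts σdirt := by
  have hty : ∀ (σ : List (ℕ × VTy)) (A : VTy),
      elabVTy (σ.foldl (fun A p => A.substTy p.1 p.2) A)
        = (elabVTy A).substTys (σ.map (Prod.map id elabVTy)) := by
    intro σ; induction σ <;> simp_all [ExEff.VTy.substTys, elabVTy_substTy]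
  have hdirt : ∀ (σ : List (ℕ × Dirt)) (A : VTy),
      elabVTy (σ.foldl (fun A p => A.substDirt p.1 p.2) A) = (elabVTy A).substDirts σ := by
    intro σ; induction σ <;> simp_all [ExEff.VTy.substDirts, elabVTy_substDirt]
  rw [VTy.multiSubst, hdirt, hty]

theorem elabSimpleCt_multiSubst (π : SimpleCt) (σty : List (ℕ × VTy))
    (σdirt : List (ℕ × Dirt)) :
    elabSimpleCt (π.multiSubst σty σdirt)
      = ((elabSimpleCt π).substTys (σty.map (Prod.map id elabVTy))).substDirts σdirt := by
  have hty : ∀ (σ : List (ℕ × VTy)) (π : SimpleCt),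
      elabSimpleCt (σ.foldl (fun π p => π.substTy p.1 p.2) π)
        = (elabSimpleCt π).substTys (σ.map (Prod.map id elabVTy)) := by
    intro σ; induction σ <;> simp_all [ExEff.SimpleCt.substTys, elabSimpleCt_substTy]
  have hdirt : ∀ (σ : List (ℕ × Dirt)) (π : SimpleCt),
      elabSimpleCt (σ.foldl (fun π p => π.substDirt p.1 p.2) π)
        = (elabSimpleCt π).substDirts σ := by
    intro σ; induction σ <;> simp_all [ExEff.SimpleCt.substDirts, elabSimpleCt_substDirt]
  rw [SimpleCt.multiSubst, hdirt, hty]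

theorem Entails.coTyping {Γ : Env} {γ : ExEff.Coercion} {ρ : Ct} (h : Entails Γ γ ρ) :
    CoTyping (elabEnv Γ) γ (elabCt ρ) := by
  induction h with
  | var hm => exact .var (List.mem_map_of_mem (f := elabEntry) hm)
  | reflVar hm => exact .reflVar (List.mem_map_of_mem (f := elabEntry) hm)
  | unit => exact .unit
  | reflDirt => exact .reflDirt
  | arrow _ _ ih₁ ih₂ => exact .arrow ih₁ ih₂
  | handler _ _ ih₁ ih₂ => exact .handler ih₁ ih₂
  | comp _ _ ih₁ ih₂ => exact .bang ih₁ ih₂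
  | dirtNil => exact .emptyDirt
  | dirtOp _ ih => exact .consOp ih

theorem elabSig_eq_some {sg : Sig} {op : Op} {A B : VTy} (h : sg op = some (A, B)) :
    elabSig sg op = some (elabVTy A, elabVTy B) := by
  simp [elabSig, h]

theorem elabScheme_eq (S : Scheme) :
    elabScheme S = (((elabVTy S.body).quals (S.cts.map elabSimpleCt)).allDirts S.dirts
      |>.allTys S.tys).allSkels S.skels := by
  simp [elabScheme, ExEff.VTy.allSkels, ExEff.VTy.allTys, ExEff.VTy.allDirts, ExEff.VTy.quals,
    List.foldr_map]

theorem vTyping_applyAll {sg : ExEff.Sig} {Γ : Env} {x : ℕ} {S : Scheme} {τs : List Skel}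
    {As : List VTy} {Δs : List Dirt} {γs : List ExEff.Coercion} (hx : Entry.termVar x S ∈ Γ)
    (hτs : τs.length = S.skels.length) (hAs : As.length = S.tys.length)
    (hΔs : Δs.length = S.dirts.length)
    (hγs : List.Forall₂ (fun γ π => Entails Γ γ
      (.simple (π.multiSubst ((S.tys.map Prod.fst).zip As) (S.dirts.zip Δs)))) γs S.cts) :
    VTyping sg (elabEnv Γ) (applyAll (.var x) τs (As.map elabVTy) Δs γs)
      (elabVTy (S.body.multiSubst ((S.tys.map Prod.fst).zip As) (S.dirts.zip Δs))) := by
  have hx' : VTyping sg (elabEnv Γ) (.var x) (elabScheme S) :=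
    .var (List.mem_map_of_mem (f := elabEntry) hx)
  rw [elabScheme_eq] at hx'
  set R := ((elabVTy S.body).quals (S.cts.map elabSimpleCt)).allDirts S.dirts
  have hR : ∀ ς τ, R.substSkel ς τ = R := by
    intro ς τ
    simp [R, ExEff.VTy.substSkel_allDirts, ExEff.VTy.substSkel_quals, substSkel_elabVTy,
      substSkel_elabSimpleCt, Function.comp_def]
  obtain ⟨tys', hfst, hskel⟩ :=
    ExEff.VTy.substSkels_allTys_of_substSkel_eq (S.skels.zip τs) S.tys hR
  have hτ := VTyping.foldl_appSkel hτs.symm hx'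
  rw [hskel] at hτ
  have hA := VTyping.foldl_appTy (Ts := As.map elabVTy)
    (by simpa [hAs] using congrArg List.length hfst) hτ
  rw [hfst, List.zip_map_right, ExEff.VTy.substTys_allDirts, ExEff.VTy.substTys_quals] at hA
  have hΔ := VTyping.foldl_appDirt hΔs.symm hA
  rw [ExEff.VTy.substDirts_quals, ← elabVTy_multiSubst] at hΔ
  refine VTyping.foldl_appCo ?_ hΔ
  simp only [List.forall₂_map_right_iff]
  exact hγs.imp fun γ π h => by simpa [elabCt, elabSimpleCt_multiSubst] using h.coTyping

theorem vTyping_genWrap {sg : ExEff.Sig} {Γ : Env} {S : Scheme} {ωs : List ℕ} {v : ExEff.Value}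
    (hωs : ωs.length = S.cts.length)
    (hv : VTyping sg (elabEnv (genEntries S ωs ++ Γ)) v (elabVTy S.body)) :
    VTyping sg (elabEnv Γ) (genWrap S ωs v) (elabScheme S) := by
  set cs := (ωs.zip S.cts).map (Prod.map id elabSimpleCt)
  have hcs : cs.map Prod.snd = S.cts.map elabSimpleCt := by
    rw [List.map_map, show Prod.snd ∘ Prod.map id elabSimpleCt = elabSimpleCt ∘ Prod.snd from
      rfl, ← List.map_map, List.map_snd_zip hωs.ge]
  have hwrap : genWrap S ωs v = S.skels.foldr .lamSkel (S.tys.foldr (fun p => .lamTy p.1 p.2)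
      (S.dirts.foldr .lamDirt (cs.foldr (fun p => .lamCo p.1 p.2) v))) := by
    simp [genWrap, cs, List.foldr_map]
  rw [hwrap, elabScheme_eq, ← hcs]
  -- the abstractions extend the environment in the reverse order of `genEntries`
  refine .foldr_lamSkel (.foldr_lamTy (.foldr_lamDirt (.foldr_lamCo (hv.mono ?_))))
  intro e he
  simp [elabEnv, elabEntry, genEntries, cs] at he ⊢
  grind

end ImpEff

/-- **Type preservation of elaboration from ImpEff to ExEff (computation
    part)**: if `Γ ⊢c c : C ↝ c'` holds in ImpEff, then
    `elab(Γ) ⊢c c' : elab(C)` holds in ExEff. -/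
theorem ImpEff.elaboration_type_preservation_computations (sg : ImpEff.Sig)
    (Γ : ImpEff.Env) (c : ImpEff.Comp) (C : ImpEff.CTy) (c' : ExEff.Comp)
    (h : ImpEff.ElabComp sg Γ c C c') :
    ExEff.CTyping (ImpEff.elabSig sg) (ImpEff.elabEnv Γ) c' (ImpEff.elabCTy C) := by
  refine ElabComp.rec
    (motive_1 := fun Γ _ A v' _ => ExEff.VTyping (elabSig sg) (elabEnv Γ) v' (elabVTy A))
    (motive_2 := fun Γ _ B Δ cls' O _ =>
      ExEff.ClausesTyping (elabSig sg) (elabEnv Γ) cls' (elabVTy B) Δ O)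
    (motive_3 := fun Γ _ C c' _ => ExEff.CTyping (elabSig sg) (elabEnv Γ) c' (elabCTy C))
    (fun hx hτs hAs hΔs hσty hσdirt hγs => by
      subst hσty hσdirt; exact vTyping_applyAll hx hτs hAs hΔs hγs)
    (fun _ hγ ih => .cast ih hγ.coTyping)
    .unit
    (fun _ ih => .lam ih)
    (fun _ _ ihr ihcls => .handler ihr ihcls)
    .nil
    (fun hop _ _ ihc ihrest => .cons (elabSig_eq_some hop) ihc ihrest)
    (fun _ hγ ih => .cast ih hγ.coTyping)
    (fun _ _ ih₁ ih₂ => .app ih₁ ih₂)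
    (fun hωs _ _ ihv ihc => .letIn (vTyping_genWrap hωs ihv) ihc)
    (fun _ ih => .ret ih)
    (fun hop _ _ hmem ihv ihc => .opCall (elabSig_eq_some hop) ihv ihc hmem)
    (fun _ _ ih₁ ih₂ => .doIn ih₁ ih₂)
    (fun _ _ ih₁ ih₂ => .handle ih₁ ih₂)
    h
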